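/- In the Rees matrix semigroup M(V, n, n, P) over the elementary abelian group V = (ℤ/pℤ)^{n+n²} with P(i,j) = v_{i,j} (the (ni+j)-th basis vector), setting s_i = (i, v_i, i), the product s_{i_1} s_{i_2} ⋯ s_{i_r} equals (i_1, v, i_r) where v = Σ_i λ_i v_i + Σ_{i,j} λ_{i,j} v_{i,j}, with λ_i equal mod p to the number of occurrences of a_i in the word a_{i_1}⋯a_{i_r}, and λ_{i,j} equal mod p to the number of occurrences of the factor a_i a_j in that word. -/
import Mathlib


/-- Number of occurrences of `w` as a contiguous factor of `u`. -/
def occ {α : Type*} [DecidableEq α] (w u : List α) : ℕ :=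
  u.tails.countP fun t => decide (w <+: t)

/-- The additive group V = (ℤ/pℤ)^{n+n²}, coordinates indexed by letters
(left) and two-letter words (right). -/
abbrev RV (p n : ℕ) : Type := (Fin n ⊕ Fin n × Fin n) → ZMod p

/-- Multiplication of the Rees matrix semigroup M(V,n,n,P) with sandwich
matrix P(λ,j) = v_{λ,j}, the (λ,j)-th canonical basis vector (additive
notation). -/
def reesMulV (p n : ℕ) (x y : Fin n × RV p n × Fin n) :
    Fin n × RV p n × Fin n :=
  (x.1, x.2.1 + Pi.single (Sum.inr (x.2.2, y.1)) 1 + y.2.1, y.2.2)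

/-- The generator s_i = (i, v_i, i). -/
def sGen (p n : ℕ) (i : Fin n) : Fin n × RV p n × Fin n :=
  (i, Pi.single (Sum.inl i) 1, i)

/-- The product s_{i_1} s_{i_2} ⋯ s_{i_r} for the word a :: l. -/
def prodGen (p n : ℕ) (a : Fin n) (l : List (Fin n)) :
    Fin n × RV p n × Fin n :=
  l.foldl (fun acc b => reesMulV p n acc (sGen p n b)) (sGen p n a)

/-- Auxiliary accumulated sum. -/
def Fsum (p n : ℕ) (lam : Fin n) : List (Fin n) → RV p n
  | [] => 0
  | b :: l => Pi.single (Sum.inr (lam, b)) 1 + Pi.single (Sum.inl b) 1 + Fsum p n b l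

lemma foldl_eq (p n : ℕ) (l : List (Fin n)) :
    ∀ (i lam : Fin n) (g : RV p n),
      l.foldl (fun acc b => reesMulV p n acc (sGen p n b)) (i, g, lam)
        = (i, g + Fsum p n lam l, l.getLastD lam) := by
  induction l with
  | nil => intro i lam g; simp [Fsum]
  | cons b l ih =>
    intro i lam g
    rw [List.foldl_cons]
    show List.foldl (fun acc b => reesMulV p n acc (sGen p n b))
        (i, g + Pi.single (Sum.inr (lam, b)) 1 + Pi.single (Sum.inl b) 1, b) l = _
    rw [ih]
    simp only [Fsum, List.getLastD_cons]
    congr 2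
    abel

lemma occ_nil_or_single {α : Type*} [DecidableEq α] (i j a : α) :
    occ [i, j] [a] = 0 := by
  have h1 : ¬ ([i, j] <+: [a]) := fun h => by simpa using h.length_le
  have h2 : ¬ ([i, j] <+: ([] : List α)) := fun h => by simpa using h.length_le
  simp [occ, h1, h2]

lemma occ_cons_cons {α : Type*} [DecidableEq α] (i j a b : α) (l : List α) :
    occ [i, j] (a :: b :: l) = occ [i, j] (b :: l) + (if a = i ∧ b = j then 1 else 0) := by
  simp only [occ, List.tails_cons, List.countP_cons]
  congr 1
  by_cases h : a = i ∧ b = j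
  · obtain ⟨rfl, rfl⟩ := h
    simp [List.cons_prefix_cons]
  · have hp : ¬ ([i, j] <+: a :: b :: l) := by
      simp only [List.cons_prefix_cons]
      rintro ⟨rfl, rfl, -⟩
      exact h ⟨rfl, rfl⟩
    simp [if_neg h, hp]

lemma Fsum_inl (p n : ℕ) (l : List (Fin n)) :
    ∀ (lam i : Fin n), Fsum p n lam l (Sum.inl i) = (l.count i : ZMod p) := by
  induction l with
  | nil => intro lam i; simp [Fsum]
  | cons b l ih =>
    intro lam i
    simp only [Fsum, Pi.add_apply, ih, List.count_cons]
    rw [Pi.single_apply, Pi.single_apply]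
    push_cast
    by_cases h : b = i <;> simp [h, Ne.symm, add_comm]

lemma Fsum_inr (p n : ℕ) (l : List (Fin n)) :
    ∀ (lam i j : Fin n), Fsum p n lam l (Sum.inr (i, j)) = (occ [i, j] (lam :: l) : ZMod p) := by
  induction l with
  | nil => intro lam i j; simp [Fsum, occ_nil_or_single]
  | cons b l ih =>
    intro lam i j
    simp only [Fsum, Pi.add_apply, ih, occ_cons_cons]
    rw [Pi.single_apply, Pi.single_apply]
    push_cast
    by_cases h : lam = i ∧ b = j
    · obtain ⟨rfl, rfl⟩ := h
      simp [Prod.ext_iff, add_comm]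
    · have h2 : ¬ ((i, j) = (lam, b)) := by
        intro heq
        rw [Prod.mk.injEq] at heq
        exact h ⟨heq.1.symm, heq.2.symm⟩
      simp [h, h2]

lemma getLast_cons_eq_getLastD {α : Type*} (a : α) (l : List α) :
    (a :: l).getLast (List.cons_ne_nil a l) = l.getLastD a := by
  induction l generalizing a with
  | nil => rfl
  | cons b l ih => rw [List.getLast_cons (List.cons_ne_nil b l), ih, List.getLastD_cons]

/-- In M(V,n,n,P) over V = (ℤ/pℤ)^{n+n²} with P(i,j) = v_{i,j},
the product s_{i_1}⋯s_{i_r} equals (i_1, v, i_r) where the v_i-coordinate of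
v is (mod p) the number of occurrences of a_i in the word a_{i_1}⋯a_{i_r},
and the v_{i,j}-coordinate is (mod p) the number of occurrences of the
two-letter factor a_i a_j in that word. -/
theorem stmt_16 (p n : ℕ) [Fact p.Prime] (hn : 0 < n)
    (a : Fin n) (l : List (Fin n)) :
    prodGen p n a l =
      (a,
       Sum.elim (fun i => ((a :: l).count i : ZMod p))
         (fun ij : Fin n × Fin n => (occ [ij.1, ij.2] (a :: l) : ZMod p)),
       (a :: l).getLast (List.cons_ne_nil a l)) := by
  rw [prodGen, sGen, foldl_eq, getLast_cons_eq_getLastD]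
  refine Prod.ext rfl (Prod.ext ?_ rfl)
  funext x
  cases x with
  | inl i =>
    simp only [Pi.add_apply, Sum.elim_inl, Fsum_inl, List.count_cons]
    rw [Pi.single_apply]
    push_cast
    by_cases h : a = i <;> simp [h, Ne.symm, add_comm]
  | inr ij =>
    obtain ⟨i, j⟩ := ij
    simp only [Pi.add_apply, Sum.elim_inr, Fsum_inr]
    rw [Pi.single_apply]
    simp
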